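/- arXiv:0803.3222 — 2 statements merged into one kernel-verified Lean document; each statement's English description precedes it below -/
import Mathlib

section
/- Let p be an odd prime and G a finite p-group. Suppose x, g ∈ G and H is an abelian normal subgroup of index p containing x, with y = [x, g⁻¹] ∈ H and z = [y, g⁻¹] ∈ Z(G), and g⁻ᵖ centralizes x. If X = ⟨Z(G), x, y⟩ is abelian, then for every integer j ≥ 0: z^{g^{-j}} = z, y^{g^{-j}} = y·z^j, and x^{g^{-j}} = x·y^j·z^{C(j,2)}, and moreover y^p = z^p = 1. -/
noncomputable section

def IsChar (G : Type) [Group G] (χ : G → ℂ) : Prop :=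
  ∃ V : FDRep ℂ G, ∀ g, χ g = FDRep.character V g

def IsIrrChar (G : Type) [Group G] (χ : G → ℂ) : Prop :=
  ∃ V : FDRep ℂ G, CategoryTheory.Simple V ∧ ∀ g, χ g = FDRep.character V g

def IsLinChar (G : Type) [Group G] (χ : G → ℂ) : Prop :=
  IsIrrChar G χ ∧ χ 1 = 1

def IsConstituent (G : Type) [Group G] (θ Θ : G → ℂ) : Prop :=
  ∃ (c : ℕ) (Θ' : G → ℂ), 0 < c ∧ (IsChar G Θ' ∨ Θ' = 0) ∧ Θ = (c : ℂ) • θ + Θ'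

open Classical in
def ind {G : Type} [Group G] [Fintype G] (H : Subgroup G) (ξ : H → ℂ) : G → ℂ :=
  fun g => (Nat.card H : ℂ)⁻¹ * ∑ x : G, if h : x * g * x⁻¹ ∈ H then ξ ⟨x * g * x⁻¹, h⟩ else 0

def conjChar {G : Type} [Group G] (χ : G → ℂ) : G → ℂ := fun g => starRingEnd ℂ (χ g)

/-!
Conjugation `f = MulAut.conj g` satisfies `f x = x * y`, `f y = y * z`, `f z = z` with `z` central,
so iterating gives `f^[j] y = y * z ^ j` and `f^[j] x = x * y ^ j * z ^ C(j,2)`, the exponent of `z`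
growing by `j` at each step. As `f^[p]` fixes `x`, it also fixes `y = x⁻¹ * f x`; comparing the
formulas at `j = p` yields `z ^ p = 1` and `y ^ p * z ^ C(p,2) = 1`, and `p ∣ C(p,2)` for odd `p`.
-/

section Endomorphism

variable {M F : Type*} [Monoid M] [FunLike F M M] [MonoidHomClass F M M] (f : F) {x y z : M}

theorem iterate_apply_eq_mul_pow (hz : f z = z) (hy : f y = y * z) (j : ℕ) :
    f^[j] y = y * z ^ j := by
  induction j with
  | zero => simp
  | succ j ih =>
    rw [Function.iterate_succ_apply', ih, map_mul, hy, map_pow, hz, mul_assoc, ← pow_succ']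

theorem iterate_apply_eq_mul_pow_mul_pow_choose_two (hyz : Commute y z) (hz : f z = z)
    (hy : f y = y * z) (hx : f x = x * y) (j : ℕ) :
    f^[j] x = x * y ^ j * z ^ j.choose 2 := by
  induction j with
  | zero => simp
  | succ j ih =>
    rw [Function.iterate_succ_apply', ih, map_mul, map_mul, hx, map_pow, map_pow, hy, hz,
      hyz.mul_pow, Nat.choose_succ_succ', Nat.choose_one_right, pow_succ', pow_add]
    simp only [mul_assoc]

end Endomorphism

theorem iterate_apply_eq_self_of_apply_eq_mul {M F : Type*} [LeftCancelMonoid M] [FunLike F M M]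
    [MonoidHomClass F M M] (f : F) {x y : M} {n : ℕ} (hx : f x = x * y) (hxn : f^[n] x = x) :
    f^[n] y = y := by
  have h : x * f^[n] y = x * y :=
    calc x * f^[n] y = f^[n] (f x) := by rw [hx, iterate_map_mul, hxn]
      _ = f (f^[n] x) := Function.Commute.iterate_self f n x
      _ = x * y := by rw [hxn, hx]
  exact mul_left_cancel h

theorem Nat.dvd_choose_two_of_odd {n : ℕ} (hn : Odd n) : n ∣ n.choose 2 := by
  obtain ⟨m, rfl⟩ := hn
  refine ⟨m, ?_⟩
  rw [Nat.choose_two_right, Nat.add_sub_cancel, mul_left_comm, Nat.mul_div_cancel_left _ two_pos]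

theorem MulAut.conj_iterate_apply {G : Type*} [Group G] (g a : G) (j : ℕ) :
    (MulAut.conj g)^[j] a = g ^ j * a * g⁻¹ ^ j := by
  induction j with
  | zero => simp
  | succ j ih =>
    rw [Function.iterate_succ_apply', ih, MulAut.conj_apply, pow_succ', pow_succ]
    group

theorem stmt10_general (p : ℕ) (hodd : Odd p) {G : Type} [Group G]
    (x g y z : G)
    (hy : y = x⁻¹ * g * x * g⁻¹)
    (hz : z = y⁻¹ * g * y * g⁻¹) (hzZ : z ∈ Subgroup.center G)
    (hgp : Commute (g⁻¹ ^ p) x) :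
    (∀ j : ℕ, g ^ j * z * g⁻¹ ^ j = z ∧ g ^ j * y * g⁻¹ ^ j = y * z ^ j ∧
      g ^ j * x * g⁻¹ ^ j = x * y ^ j * z ^ (j.choose 2)) ∧
    y ^ p = 1 ∧ z ^ p = 1 := by
  set f := MulAut.conj g
  have hcentral : ∀ a, a * z = z * a := Subgroup.mem_center_iff.mp hzZ
  have hfz : f z = z := by rw [MulAut.conj_apply, hcentral g, mul_inv_cancel_right]
  have hfy : f y = y * z := by rw [MulAut.conj_apply, hz]; group
  have hfx : f x = x * y := by rw [MulAut.conj_apply, hy]; group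
  have hfz_iter (j : ℕ) : f^[j] z = z := Function.iterate_fixed hfz j
  have hfy_iter := iterate_apply_eq_mul_pow f hfz hfy
  have hfx_iter := iterate_apply_eq_mul_pow_mul_pow_choose_two f (hcentral y) hfz hfy hfx
  have hfxp : f^[p] x = x := by
    rw [MulAut.conj_iterate_apply, mul_assoc, ← hgp.eq, inv_pow, mul_inv_cancel_left]
  have hfyp := iterate_apply_eq_self_of_apply_eq_mul f hfx hfxp
  have hzp : z ^ p = 1 := mul_eq_left.mp ((hfy_iter p).symm.trans hfyp)
  have hyp : y ^ p = 1 := by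
    obtain ⟨k, hk⟩ := Nat.dvd_choose_two_of_odd hodd
    have := (hfx_iter p).symm.trans hfxp
    rwa [hk, pow_mul, hzp, one_pow, mul_one, mul_eq_left] at this
  refine ⟨fun j => ?_, hyp, hzp⟩
  simp only [← MulAut.conj_iterate_apply]
  exact ⟨hfz_iter j, hfy_iter j, hfx_iter j⟩

theorem stmt10 (p : ℕ) (hp : p.Prime) (hodd : Odd p) {G : Type} [Group G] [Fintype G]
    (hG : IsPGroup p G) (H : Subgroup G) [H.Normal] (hidx : H.index = p)
    (habel : ∀ a b : ↥H, a * b = b * a)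
    (x g y z : G) (hx : x ∈ H)
    (hy : y = x⁻¹ * g * x * g⁻¹) (hyH : y ∈ H)
    (hz : z = y⁻¹ * g * y * g⁻¹) (hzZ : z ∈ Subgroup.center G)
    (hgp : Commute (g⁻¹ ^ p) x)
    (hXab : ∀ a ∈ Subgroup.closure ((Subgroup.center G : Set G) ∪ {x, y}),
            ∀ b ∈ Subgroup.closure ((Subgroup.center G : Set G) ∪ {x, y}), a * b = b * a) :
    (∀ j : ℕ, g ^ j * z * g⁻¹ ^ j = z ∧ g ^ j * y * g⁻¹ ^ j = y * z ^ j ∧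
      g ^ j * x * g⁻¹ ^ j = x * y ^ j * z ^ (j.choose 2)) ∧
    y ^ p = 1 ∧ z ^ p = 1 :=
  stmt10_general p hodd x g y z hy hz hzZ hgp
end
end

section
/- Let G be a finite p-group, χ, ψ ∈ Irr(G) of degree p with Ker(χ) ∩ Ker(ψ) = 1, H an abelian normal subgroup of index p with χ = ξ^G, ψ = τ^G for ξ, τ ∈ Lin(H), Z = Z(G) = Z(χ) = Z(ψ), and Y/Z a chief factor of G with Y ≤ H. If the linear character ξ_Y·τ_Y of Y is G-invariant, then the restriction (χψ)_Y has exactly p distinct irreducible (linear) constituents, each with multiplicity p: (χψ)_Y = p·Σⱼ₌₁ᵖ ξ_Y·(τⱼ)_Y. -/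
noncomputable section

/-!
Choose `g ∈ G` whose image generates `G ⧸ H ≅ C_p`. Then `χ_H = ∑_{j<p} ξ^{g^j}` and
`ψ_H = ∑_{j<p} τ^{g^j}`. The image of `Y` in the `p`-group `G ⧸ Z` is normal of order `p`, hence
central, so for `y ∈ Y` the commutator `c = ⁅g, y⁆` is central, `g^j y g^{-j} = y c^j`, and
`c^p = 1` because `g^p ∈ H` commutes with `y`. Thus `χ(y) = ξ(y) ∑_j ξ(c)^j` and
`ψ(y) = τ(y) ∑_j τ(c)^j`, while the invariance of `ξ_Y τ_Y` under `g` says `ξ(c) τ(c) = 1`; the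
product formula is then the identity `(∑_j α^j)(∑_j β^j) = p ∑_j β^j` for `α β = 1`, `β^p = 1`.
The `p` constituents are distinct because `τ(c)` is a primitive `p`-th root of unity for any
`y ∈ Y \ Z`: if `τ(c) = 1` then also `ξ(c) = 1`, so `|χ(y)| = p = χ(1)` and `y ∈ Z(χ) = Z`.
-/

open scoped commutatorElement

theorem LinearMap.trace_mul_of_finrank_eq_one {K M : Type*} [Field K] [AddCommGroup M]
    [Module K M] (hM : Module.finrank K M = 1) (f g : M →ₗ[K] M) :
    trace K M (f * g) = trace K M f * trace K M g := by
  obtain ⟨a, rfl⟩ := (f.existsUnique_eq_smul_id_of_finrank_eq_one hM).exists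
  obtain ⟨b, rfl⟩ := (g.existsUnique_eq_smul_id_of_finrank_eq_one hM).exists
  have : FiniteDimensional K M := Module.finite_of_finrank_eq_succ hM
  simp [← Module.End.one_eq_id, trace_one, hM, mul_comm]

theorem IsLinChar.map_mul {G : Type} [Group G] {χ : G → ℂ} (hχ : IsLinChar G χ) (a b : G) :
    χ (a * b) = χ a * χ b := by
  obtain ⟨⟨V, -, hV⟩, h1⟩ := hχ
  have hdim : Module.finrank ℂ V = 1 := by
    exact_mod_cast V.char_one.symm.trans ((hV 1).symm.trans h1)
  simp only [hV, FDRep.character, _root_.map_mul]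
  exact LinearMap.trace_mul_of_finrank_eq_one hdim _ _

theorem IsLinChar.exists_monoidHom {G : Type} [Group G] {χ : G → ℂ} (hχ : IsLinChar G χ) :
    ∃ m : G →* ℂ, ⇑m = χ :=
  ⟨⟨⟨χ, hχ.2⟩, hχ.map_mul⟩, rfl⟩

theorem MonoidHom.isLinChar {G : Type} [Group G] [Finite G] (m : G →* ℂ) : IsLinChar G m := by
  have : Fintype G := Fintype.ofFinite G
  let V := FDRep.of ((algebraMap ℂ (Module.End ℂ ℂ) : ℂ →* Module.End ℂ ℂ).comp m)
  have hV : ∀ g, V.character g = m g := fun g => by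
    simp [V, FDRep.character, Algebra.algebraMap_eq_smul_one]
  refine ⟨⟨V, ?_, fun g => (hV g).symm⟩, map_one m⟩
  rw [FDRep.simple_iff_char_is_norm_one]
  simp only [hV, ← map_mul, mul_inv_cancel, map_one, Finset.sum_const, Finset.card_univ,
    nsmul_eq_mul, mul_one, Nat.card_eq_fintype_card]

theorem MonoidHom.norm_apply_eq_one {G : Type*} [Group G] [Finite G] (m : G →* ℂ) (g : G) :
    ‖m g‖ = 1 :=
  Complex.norm_eq_one_of_pow_eq_one (by rw [← map_pow, pow_card_eq_one', map_one]) Nat.card_pos.ne'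

theorem geom_sum_mul_geom_sum_of_mul_eq_one {K : Type*} [Field K] {n : ℕ} {α β : K}
    (hαβ : α * β = 1) (hβ : β ^ n = 1) :
    (∑ i : Fin n, α ^ (i : ℕ)) * ∑ j : Fin n, β ^ (j : ℕ) = n * ∑ j : Fin n, β ^ (j : ℕ) := by
  by_cases hβ1 : β = 1
  · simp [hβ1, (mul_one α).symm.trans (hβ1 ▸ hαβ)]
  · have hsum : ∑ j : Fin n, β ^ (j : ℕ) = 0 := by
      rw [Fin.sum_univ_eq_sum_range, geom_sum_eq hβ1, hβ, sub_self, zero_div]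
    rw [hsum, mul_zero, mul_zero]

theorem IsPGroup.le_center_of_card_eq_prime {p : ℕ} [Fact p.Prime] {G : Type*} [Group G]
    (hG : IsPGroup p G) {N : Subgroup G} [N.Normal] (hN : Nat.card N = p) :
    N ≤ Subgroup.center G := by
  let _ : MulAction G N := MulAction.compHom N (MulAut.conjNormal (H := N))
  have : Finite N := Nat.finite_of_card_ne_zero (hN ▸ (Fact.out : p.Prime).ne_zero)
  obtain ⟨b, hb, hb1⟩ := hG.exists_fixed_point_of_prime_dvd_card_of_fixed_point N
    (hN ▸ dvd_rfl) (a := 1) fun g => map_one (MulAut.conjNormal (H := N) g)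
  have hb_center : (b : G) ∈ Subgroup.center G := Subgroup.mem_center_iff.mpr fun g => by
    have := congrArg Subtype.val (hb g)
    rw [MulAction.compHom_smul_def, MulAut.smul_def, MulAut.conjNormal_apply] at this
    nth_rewrite 2 [← this]; group
  intro n hn
  obtain ⟨k, hk⟩ := Subgroup.mem_zpowers_iff.mp
    ((zpowers_eq_top_of_prime_card hN (Ne.symm hb1)).symm ▸ Subgroup.mem_top (⟨n, hn⟩ : N))
  rw [show n = ((b ^ k : N) : G) by rw [hk], Subgroup.coe_zpow]
  exact (Subgroup.center G).zpow_mem hb_center k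

theorem Subgroup.card_map_mk'_mul {G : Type*} [Group G] [Finite G] {K Y : Subgroup G} [K.Normal]
    (hKY : K ≤ Y) : Nat.card (Y.map (QuotientGroup.mk' K)) * Nat.card K = Nat.card Y := by
  have hindex : (Y.map (QuotientGroup.mk' K)).index = Y.index :=
    Y.index_map_eq (QuotientGroup.mk'_surjective K) (by rwa [QuotientGroup.ker_mk'])
  have h1 := (Y.map (QuotientGroup.mk' K)).card_mul_index
  have h2 := Y.card_mul_index
  have h3 := K.card_eq_card_quotient_mul_card_subgroup
  rw [hindex] at h1
  apply Nat.eq_of_mul_eq_mul_right (Nat.pos_of_ne_zero Y.index_ne_zero_of_finite)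
  rw [h2, h3, ← h1]; ring

theorem IsPGroup.commutatorElement_mem_of_card_eq_prime_mul {p : ℕ} [Fact p.Prime] {G : Type*}
    [Group G] [Finite G] (hG : IsPGroup p G) {K Y : Subgroup G} [K.Normal] [hY : Y.Normal]
    (hKY : K ≤ Y) (hcard : Nat.card Y = p * Nat.card K) (g : G) {y : G} (hy : y ∈ Y) :
    ⁅g, y⁆ ∈ K := by
  have : (Y.map (QuotientGroup.mk' K)).Normal := hY.map _ (QuotientGroup.mk'_surjective K)
  have hcard' : Nat.card (Y.map (QuotientGroup.mk' K)) = p := by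
    have := Subgroup.card_map_mk'_mul hKY
    rw [hcard] at this
    exact Nat.eq_of_mul_eq_mul_right Nat.card_pos this
  have hcentral := (hG.to_quotient K).le_center_of_card_eq_prime hcard'
    (Subgroup.mem_map_of_mem _ hy)
  rw [← QuotientGroup.eq_one_iff, ← QuotientGroup.mk'_apply, map_commutatorElement,
    commutatorElement_eq_one_iff_mul_comm]
  exact (Subgroup.mem_center_iff.mp hcentral _)

theorem exists_orderOf_mk_eq_index {G : Type*} [Group G] {H : Subgroup G} [H.Normal]
    (hH : H.index.Prime) : ∃ g : G, orderOf (g : G ⧸ H) = H.index := by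
  have : Fact (Nat.card (G ⧸ H)).Prime := ⟨hH⟩
  have : IsCyclic (G ⧸ H) := isCyclic_of_prime_card rfl
  obtain ⟨q, hq⟩ := IsCyclic.exists_ofOrder_eq_natCard (α := G ⧸ H)
  obtain ⟨g, rfl⟩ := QuotientGroup.mk_surjective q
  exact ⟨g, hq⟩

theorem bijective_pow_mul_of_orderOf_eq_index {G : Type*} [Group G] [Finite G] {H : Subgroup G}
    [H.Normal] {g : G} (hg : orderOf (g : G ⧸ H) = H.index) :
    Function.Bijective fun x : Fin H.index × H => g ^ (x.1 : ℕ) * x.2 := by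
  refine (Nat.bijective_iff_injective_and_card _).mpr ⟨?_, ?_⟩
  · rintro ⟨i, h₁⟩ ⟨j, h₂⟩ hij
    have hcoset : (g : G ⧸ H) ^ (i : ℕ) = (g : G ⧸ H) ^ (j : ℕ) := calc
      _ = ((g ^ (i : ℕ) * h₁ : G) : G ⧸ H) := by rw [QuotientGroup.mk_mul_of_mem _ h₁.2]; rfl
      _ = ((g ^ (j : ℕ) * h₂ : G) : G ⧸ H) := congrArg _ hij
      _ = _ := by rw [QuotientGroup.mk_mul_of_mem _ h₂.2]; rfl
    have hij' : i = j := Fin.ext (pow_injOn_Iio_orderOf (by simp [hg]) (by simp [hg]) hcoset)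
    subst hij'
    simpa using hij
  · rw [Nat.card_prod, Nat.card_fin, Subgroup.index_mul_card]

open Classical in
theorem ind_apply_eq_sum_conjNormal_pow {G : Type} [Group G] [Fintype G] {H : Subgroup G}
    [H.Normal] (habel : ∀ a b : H, a * b = b * a) (ξ : H → ℂ) {g : G}
    (hg : orderOf (g : G ⧸ H) = H.index) (h : H) :
    ind H ξ h = ∑ j : Fin H.index, ξ ((MulAut.conjNormal g ^ (j : ℕ)) h) := by
  have hterm : ∀ x : Fin H.index × H,
      (if hx : (g ^ (x.1 : ℕ) * x.2) * h * (g ^ (x.1 : ℕ) * x.2)⁻¹ ∈ H then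
        ξ ⟨_, hx⟩ else 0) = ξ ((MulAut.conjNormal g ^ (x.1 : ℕ)) h) := by
    rintro ⟨j, h₀⟩
    have hconj : (g ^ (j : ℕ) * h₀) * h * (g ^ (j : ℕ) * h₀)⁻¹ =
        ((MulAut.conjNormal g ^ (j : ℕ)) h : G) := by
      have hcomm : (h₀ : G) * h = h * h₀ := congrArg Subtype.val (habel h₀ h)
      rw [← map_pow, MulAut.conjNormal_apply, mul_assoc (g ^ (j : ℕ)) (h₀ : G), hcomm]
      group
    rw [dif_pos (hconj ▸ Subtype.coe_prop _)]
    exact congrArg ξ (Subtype.ext hconj)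
  unfold ind
  rw [← Fintype.sum_bijective _ (bijective_pow_mul_of_orderOf_eq_index hg) _ _ fun _ => rfl]
  simp only [hterm, Fintype.sum_prod_type, Finset.sum_const, Finset.card_univ, nsmul_eq_mul,
    ← Finset.mul_sum, Nat.card_eq_fintype_card]
  rw [← mul_assoc, inv_mul_cancel₀ (by exact_mod_cast Fintype.card_ne_zero), one_mul]

theorem MulAut.pow_apply_eq_mul_pow {M : Type*} [Monoid M] (φ : MulAut M) {h c : M}
    (hh : φ h = h * c) (hc : φ c = c) (k : ℕ) : (φ ^ k) h = h * c ^ k := by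
  induction k with
  | zero => simp
  | succ k ih =>
    rw [pow_succ', MulAut.mul_apply, ih, map_mul, hh, map_pow, hc, mul_assoc, ← pow_succ']

def commutatorOfNormal {G : Type*} [Group G] {H : Subgroup G} [H.Normal] (g : G) (h : H) : H :=
  MulAut.conjNormal g h * h⁻¹

section commutatorOfNormal

variable {G : Type*} [Group G] {H : Subgroup G} [H.Normal] {g : G} {h : H}

@[simp]
theorem coe_commutatorOfNormal : (commutatorOfNormal g h : G) = ⁅g, (h : G)⁆ := by
  simp [commutatorOfNormal, commutatorElement_def, MulAut.conjNormal_apply]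

theorem conjNormal_pow_apply (hc : ⁅g, (h : G)⁆ ∈ Subgroup.center G) (k : ℕ) :
    (MulAut.conjNormal g ^ k) h = h * commutatorOfNormal g h ^ k := by
  rw [← coe_commutatorOfNormal (h := h)] at hc
  refine MulAut.pow_apply_eq_mul_pow _ (Subtype.ext ?_) (Subtype.ext ?_) k
  · rw [Subgroup.coe_mul, Subgroup.mem_center_iff.mp hc, ← Subgroup.coe_mul,
      commutatorOfNormal, inv_mul_cancel_right]
  · rw [MulAut.conjNormal_apply, Subgroup.mem_center_iff.mp hc, mul_inv_cancel_right]

theorem commutatorOfNormal_pow_eq_one (habel : ∀ a b : H, a * b = b * a)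
    (hc : ⁅g, (h : G)⁆ ∈ Subgroup.center G) {k : ℕ} (hk : g ^ k ∈ H) :
    commutatorOfNormal g h ^ k = 1 := by
  have hfix : (MulAut.conjNormal g ^ k) h = h := by
    rw [← map_pow]
    ext
    exact mul_inv_eq_of_eq_mul (congrArg Subtype.val (habel ⟨g ^ k, hk⟩ h))
  rwa [conjNormal_pow_apply hc, mul_eq_left] at hfix

theorem map_conjNormal_pow_apply (m : H →* ℂ) (hc : ⁅g, (h : G)⁆ ∈ Subgroup.center G) (k : ℕ) :
    m ((MulAut.conjNormal g ^ k) h) = m h * m (commutatorOfNormal g h) ^ k := by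
  rw [conjNormal_pow_apply hc, map_mul, map_pow]

theorem map_commutatorOfNormal_pow_index (habel : ∀ a b : H, a * b = b * a) (m : H →* ℂ)
    (hc : ⁅g, (h : G)⁆ ∈ Subgroup.center G) : m (commutatorOfNormal g h) ^ H.index = 1 := by
  rw [← map_pow, commutatorOfNormal_pow_eq_one habel hc (H.pow_index_mem g), map_one]

theorem map_commutatorOfNormal_mul_eq_one {ξ τ : H →* ℂ} (hc : ⁅g, (h : G)⁆ ∈ Subgroup.center G)
    (hinv : ξ (MulAut.conjNormal g h) * τ (MulAut.conjNormal g h) = ξ h * τ h) :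
    ξ (commutatorOfNormal g h) * τ (commutatorOfNormal g h) = 1 := by
  have hconj := conjNormal_pow_apply hc 1
  rw [pow_one, pow_one] at hconj
  rw [hconj, map_mul, map_mul, mul_mul_mul_comm] at hinv
  exact (mul_eq_left₀ (mul_ne_zero ((Group.isUnit h).map ξ).ne_zero
    ((Group.isUnit h).map τ).ne_zero)).mp hinv

theorem map_conjNormal_pow_injective (hH : H.index.Prime) (ξ : H →* ℂ) {τ : H →* ℂ}
    (hc : ⁅g, (h : G)⁆ ∈ Subgroup.center G) (hτ : τ (commutatorOfNormal g h) ≠ 1)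
    (hk : τ (commutatorOfNormal g h) ^ H.index = 1) :
    Function.Injective fun j : Fin H.index => ξ h * τ ((MulAut.conjNormal g ^ (j : ℕ)) h) := by
  have : Fact H.index.Prime := ⟨hH⟩
  have hprim : IsPrimitiveRoot (τ (commutatorOfNormal g h)) H.index :=
    IsPrimitiveRoot.iff_orderOf.mpr (orderOf_eq_prime hk hτ)
  intro i j hij
  simp only [map_conjNormal_pow_apply τ hc, ← mul_assoc] at hij
  exact Fin.ext (hprim.pow_inj i.2 j.2 (mul_left_cancel₀ (mul_ne_zero
    ((Group.isUnit h).map ξ).ne_zero ((Group.isUnit h).map τ).ne_zero) hij))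

end commutatorOfNormal

section InducedFromAbelian

variable {G : Type} [Group G] [Fintype G] {H : Subgroup G} [H.Normal] {g : G} {h : H}

theorem ind_apply_eq_mul_geom_sum (habel : ∀ a b : H, a * b = b * a)
    (hg : orderOf (g : G ⧸ H) = H.index) (m : H →* ℂ) (hc : ⁅g, (h : G)⁆ ∈ Subgroup.center G) :
    ind H m h = m h * ∑ j : Fin H.index, m (commutatorOfNormal g h) ^ (j : ℕ) := by
  simp only [ind_apply_eq_sum_conjNormal_pow habel m hg, map_conjNormal_pow_apply m hc,
    Finset.mul_sum]

theorem ind_mul_ind_apply (habel : ∀ a b : H, a * b = b * a)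
    (hg : orderOf (g : G ⧸ H) = H.index) {ξ τ : H →* ℂ} (hc : ⁅g, (h : G)⁆ ∈ Subgroup.center G)
    (hinv : ξ (MulAut.conjNormal g h) * τ (MulAut.conjNormal g h) = ξ h * τ h) :
    ind H ξ h * ind H τ h =
      H.index * ∑ j : Fin H.index, ξ h * τ ((MulAut.conjNormal g ^ (j : ℕ)) h) := by
  simp only [ind_apply_eq_mul_geom_sum habel hg _ hc, map_conjNormal_pow_apply τ hc,
    ← Finset.mul_sum]
  rw [mul_mul_mul_comm, geom_sum_mul_geom_sum_of_mul_eq_one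
    (map_commutatorOfNormal_mul_eq_one hc hinv)
    (map_commutatorOfNormal_pow_index habel τ hc)]
  ring

theorem norm_ind_apply_of_map_commutatorOfNormal_eq_one (habel : ∀ a b : H, a * b = b * a)
    (hg : orderOf (g : G ⧸ H) = H.index) {ξ τ : H →* ℂ} (hc : ⁅g, (h : G)⁆ ∈ Subgroup.center G)
    (hinv : ξ (MulAut.conjNormal g h) * τ (MulAut.conjNormal g h) = ξ h * τ h)
    (hτ : τ (commutatorOfNormal g h) = 1) : ‖ind H ξ h‖ = H.index := by
  have hξ := map_commutatorOfNormal_mul_eq_one hc hinv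
  rw [hτ, mul_one] at hξ
  simp [ind_apply_eq_mul_geom_sum habel hg ξ hc, hξ, ξ.norm_apply_eq_one]

end InducedFromAbelian

theorem stmt15_general (p : ℕ) (hp : p.Prime) {G : Type} [Group G] [Fintype G] (hG : IsPGroup p G)
    (χ ψ : G → ℂ)
    (hdχ : χ 1 = (p : ℂ))
    (H : Subgroup G) (hHnorm : H.Normal) (hidx : H.index = p)
    (habel : ∀ a b : ↥H, a * b = b * a)
    (ξ τ : ↥H → ℂ) (hξ : IsLinChar ↥H ξ) (hτ : IsLinChar ↥H τ)
    (hχind : χ = ind H ξ) (hψind : ψ = ind H τ)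
    (hZχ : {g : G | ‖χ g‖ = ‖χ 1‖} = (Subgroup.center G : Set G))
    (Y : Subgroup G) (hYnorm : Y.Normal) (hYH : Y ≤ H)
    (hZY : Subgroup.center G < Y)
    (hYchief : Nat.card ↥Y = p * Nat.card ↥(Subgroup.center G))
    (hinv : ∀ g : G, ∀ t : G, ∀ ht : t ∈ Y,
      ξ ⟨g * t * g⁻¹, hYH (hYnorm.conj_mem t ht g)⟩ *
        τ ⟨g * t * g⁻¹, hYH (hYnorm.conj_mem t ht g)⟩ =
      ξ ⟨t, hYH ht⟩ * τ ⟨t, hYH ht⟩) :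
    ∃ τs : Fin p → ↥H → ℂ, (∀ j, IsLinChar ↥H (τs j)) ∧
      (∀ h : ↥H, ψ (h : G) = ∑ j, τs j h) ∧
      Function.Injective (fun j => fun y : ↥Y => ξ ⟨(y : G), hYH y.2⟩ * τs j ⟨(y : G), hYH y.2⟩) ∧
      (∀ j, IsLinChar ↥Y (fun y : ↥Y => ξ ⟨(y : G), hYH y.2⟩ * τs j ⟨(y : G), hYH y.2⟩)) ∧
      ∀ y : G, ∀ hy : y ∈ Y,
        χ y * ψ y = (p : ℂ) * ∑ j, ξ ⟨y, hYH hy⟩ * τs j ⟨y, hYH hy⟩ := by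
  subst hidx
  have : Fact H.index.Prime := ⟨hp⟩
  obtain ⟨ξ, rfl⟩ := hξ.exists_monoidHom
  obtain ⟨τ, rfl⟩ := hτ.exists_monoidHom
  obtain ⟨g, hg⟩ := exists_orderOf_mk_eq_index hp
  have hc : ∀ y (hy : y ∈ Y), ⁅g, ((⟨y, hYH hy⟩ : H) : G)⁆ ∈ Subgroup.center G := fun y hy =>
    hG.commutatorElement_mem_of_card_eq_prime_mul hZY.le hYchief g hy
  have hinv' : ∀ y (hy : y ∈ Y), ξ (MulAut.conjNormal g ⟨y, hYH hy⟩) *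
      τ (MulAut.conjNormal g ⟨y, hYH hy⟩) = ξ ⟨y, hYH hy⟩ * τ ⟨y, hYH hy⟩ := fun y hy => by
    rw [show MulAut.conjNormal g ⟨y, hYH hy⟩ = ⟨g * y * g⁻¹, hYH (hYnorm.conj_mem y hy g)⟩ from
      Subtype.ext (MulAut.conjNormal_apply _ _)]
    exact hinv g y hy
  subst hχind hψind
  refine ⟨fun j h => τ ((MulAut.conjNormal g ^ (j : ℕ)) h),
    fun j => (τ.comp (MulAut.conjNormal g ^ (j : ℕ)).toMonoidHom).isLinChar,
    ind_apply_eq_sum_conjNormal_pow habel τ hg, ?_,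
    fun j => ((ξ * τ.comp (MulAut.conjNormal g ^ (j : ℕ)).toMonoidHom).comp
      (Subgroup.inclusion hYH)).isLinChar,
    fun y hy => ind_mul_ind_apply (h := ⟨y, hYH hy⟩) habel hg (hc y hy) (hinv' y hy)⟩
  obtain ⟨y, hyY, hyZ⟩ := SetLike.exists_of_lt hZY
  have hτc : τ (commutatorOfNormal g ⟨y, hYH hyY⟩) ≠ 1 := fun hτ1 => hyZ <| hZχ.subset <| by
    show ‖ind H ξ y‖ = ‖ind H ξ 1‖
    rw [hdχ, norm_ind_apply_of_map_commutatorOfNormal_eq_one habel hg (hc y hyY) (hinv' y hyY) hτ1,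
      Complex.norm_natCast]
  exact fun i j hij => map_conjNormal_pow_injective hp ξ (hc y hyY) hτc
    (map_commutatorOfNormal_pow_index habel τ (hc y hyY)) (congrFun hij ⟨y, hyY⟩)

theorem stmt15 (p : ℕ) (hp : p.Prime) {G : Type} [Group G] [Fintype G] (hG : IsPGroup p G)
    (χ ψ : G → ℂ) (hχ : IsIrrChar G χ) (hψ : IsIrrChar G ψ)
    (hdχ : χ 1 = (p : ℂ)) (hdψ : ψ 1 = (p : ℂ))
    (hker : ∀ g : G, χ g = χ 1 → ψ g = ψ 1 → g = 1)
    (H : Subgroup G) (hHnorm : H.Normal) (hidx : H.index = p)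
    (habel : ∀ a b : ↥H, a * b = b * a)
    (ξ τ : ↥H → ℂ) (hξ : IsLinChar ↥H ξ) (hτ : IsLinChar ↥H τ)
    (hχind : χ = ind H ξ) (hψind : ψ = ind H τ)
    (hZH : Subgroup.center G ≤ H)
    (hZχ : {g : G | ‖χ g‖ = ‖χ 1‖} = (Subgroup.center G : Set G))
    (hZψ : {g : G | ‖ψ g‖ = ‖ψ 1‖} = (Subgroup.center G : Set G))
    (Y : Subgroup G) (hYnorm : Y.Normal) (hYH : Y ≤ H)
    (hZY : Subgroup.center G < Y)
    (hYchief : Nat.card ↥Y = p * Nat.card ↥(Subgroup.center G))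
    (hinv : ∀ g : G, ∀ t : G, ∀ ht : t ∈ Y,
      ξ ⟨g * t * g⁻¹, hYH (hYnorm.conj_mem t ht g)⟩ *
        τ ⟨g * t * g⁻¹, hYH (hYnorm.conj_mem t ht g)⟩ =
      ξ ⟨t, hYH ht⟩ * τ ⟨t, hYH ht⟩) :
    ∃ τs : Fin p → ↥H → ℂ, (∀ j, IsLinChar ↥H (τs j)) ∧
      (∀ h : ↥H, ψ (h : G) = ∑ j, τs j h) ∧
      Function.Injective (fun j => fun y : ↥Y => ξ ⟨(y : G), hYH y.2⟩ * τs j ⟨(y : G), hYH y.2⟩) ∧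
      (∀ j, IsLinChar ↥Y (fun y : ↥Y => ξ ⟨(y : G), hYH y.2⟩ * τs j ⟨(y : G), hYH y.2⟩)) ∧
      ∀ y : G, ∀ hy : y ∈ Y,
        χ y * ψ y = (p : ℂ) * ∑ j, ξ ⟨y, hYH hy⟩ * τs j ⟨y, hYH hy⟩ :=
  stmt15_general p hp hG χ ψ hdχ H hHnorm hidx habel ξ τ hξ hτ hχind hψind hZχ Y hYnorm hYH hZY
    hYchief hinv
end
end
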